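/- arXiv:2102.01997 — 2 statements merged into one kernel-verified Lean document; each statement's English description precedes it below -/
import Mathlib

section
/- For a tensor T ∈ V₁⊗V₂⊗V₃, the tensor rank of T equals the minimum number of pure tensors in V₂⊗V₃ whose linear span contains the first contraction space C₁(T) = {f(T) : f ∈ V₁^∨}. -/
open scoped TensorProduct

/-- The tensor rank of a tensor in `V₁ ⊗ V₂ ⊗ V₃`: the minimum number `R` such that the
tensor is a sum of `R` pure tensors. -/
noncomputable def tensorRank3 {F : Type*} [Field F] {V₁ V₂ V₃ : Type*}
    [AddCommGroup V₁] [Module F V₁] [AddCommGroup V₂] [Module F V₂]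
    [AddCommGroup V₃] [Module F V₃] (T : V₁ ⊗[F] (V₂ ⊗[F] V₃)) : ℕ :=
  sInf {R | ∃ u : Fin R → V₁ × V₂ × V₃,
    T = ∑ j, (u j).1 ⊗ₜ[F] ((u j).2.1 ⊗ₜ[F] (u j).2.2)}

/-- The contraction `f(T) ∈ V₂ ⊗ V₃` of `T ∈ V₁ ⊗ V₂ ⊗ V₃` by `f ∈ V₁^∨`, defined on pure
tensors by `f(v₁ ⊗ v₂ ⊗ v₃) = f(v₁) • (v₂ ⊗ v₃)` and extended linearly. -/
noncomputable def contr1 {F : Type*} [Field F] {V₁ V₂ V₃ : Type*}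
    [AddCommGroup V₁] [Module F V₁] [AddCommGroup V₂] [Module F V₂]
    [AddCommGroup V₃] [Module F V₃] (f : Module.Dual F V₁) (T : V₁ ⊗[F] (V₂ ⊗[F] V₃)) :
    V₂ ⊗[F] V₃ :=
  TensorProduct.lid F (V₂ ⊗[F] V₃) (TensorProduct.map f LinearMap.id T)

/-! A tensor `T ∈ V₁ ⊗ (V₂ ⊗ V₃)` can be written as `∑ⱼ vⱼ ⊗ xⱼ` for a given family `xⱼ` exactly
when all its contractions `f(T)` lie in the span of the `xⱼ`: one direction is linearity of the
contraction, the other expands `T = ∑ᵢ eᵢ ⊗ eᵢ^∨(T)` in a basis `e` of `V₁` and rewrites each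
`eᵢ^∨(T)` in terms of the `xⱼ`. Taking the `xⱼ` to be pure tensors identifies the two minima. -/

section Contraction

variable {F : Type*} [Field F] {V₁ V₂ V₃ : Type*}
  [AddCommGroup V₁] [Module F V₁] [AddCommGroup V₂] [Module F V₂]
  [AddCommGroup V₃] [Module F V₃]

theorem contr1_sum_tmul {ι : Type*} (s : Finset ι) (f : Module.Dual F V₁) (v : ι → V₁)
    (x : ι → V₂ ⊗[F] V₃) :
    contr1 f (∑ j ∈ s, v j ⊗ₜ[F] x j) = ∑ j ∈ s, f (v j) • x j := by
  simp [contr1, map_sum]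

theorem Module.Basis.sum_tmul_contr1 {ι : Type*} [Fintype ι] (e : Module.Basis ι F V₁)
    (T : V₁ ⊗[F] (V₂ ⊗[F] V₃)) :
    ∑ i, e i ⊗ₜ[F] contr1 (e.coord i) T = T := by
  induction T using TensorProduct.induction_on with
  | zero => simp [contr1]
  | tmul v x =>
    simp only [contr1, TensorProduct.map_tmul, TensorProduct.lid_tmul, LinearMap.id_coe, id_eq,
      TensorProduct.tmul_smul, Module.Basis.coord_apply, TensorProduct.smul_tmul']
    rw [← TensorProduct.sum_tmul, e.sum_repr]
  | add T₁ T₂ h₁ h₂ =>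
    simp only [contr1, map_add, TensorProduct.tmul_add, Finset.sum_add_distrib] at h₁ h₂ ⊢
    rw [h₁, h₂]

theorem exists_eq_sum_tmul_iff_contr1_mem_span [FiniteDimensional F V₁] {ι : Type*} [Fintype ι]
    (T : V₁ ⊗[F] (V₂ ⊗[F] V₃)) (x : ι → V₂ ⊗[F] V₃) :
    (∃ v : ι → V₁, T = ∑ j, v j ⊗ₜ[F] x j) ↔
      ∀ f : Module.Dual F V₁, contr1 f T ∈ Submodule.span F (Set.range x) := by
  constructor
  · rintro ⟨v, rfl⟩ f
    rw [contr1_sum_tmul]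
    exact Submodule.sum_mem _ fun j _ => Submodule.smul_mem _ _ (Submodule.subset_span ⟨j, rfl⟩)
  · intro hspan
    let e := Module.finBasis F V₁
    choose c hc using fun i => (Submodule.mem_span_range_iff_exists_fun F).mp (hspan (e.coord i))
    refine ⟨fun j => ∑ i, c i j • e i, ?_⟩
    calc T = ∑ i, e i ⊗ₜ[F] contr1 (e.coord i) T := e.sum_tmul_contr1 T |>.symm
      _ = ∑ i, ∑ j, c i j • (e i ⊗ₜ[F] x j) := by
          simp only [← hc, TensorProduct.tmul_sum, TensorProduct.tmul_smul]
      _ = ∑ j, (∑ i, c i j • e i) ⊗ₜ[F] x j := by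
          rw [Finset.sum_comm]
          simp only [TensorProduct.sum_tmul, TensorProduct.smul_tmul']

end Contraction

theorem stmt_1_general {F : Type*} [Field F] {V₁ V₂ V₃ : Type*}
    [AddCommGroup V₁] [Module F V₁] [AddCommGroup V₂] [Module F V₂]
    [AddCommGroup V₃] [Module F V₃] [FiniteDimensional F V₁] (T : V₁ ⊗[F] (V₂ ⊗[F] V₃)) :
    tensorRank3 T = sInf {R | ∃ w : Fin R → V₂ × V₃,
      {S | ∃ f : Module.Dual F V₁, S = contr1 f T} ⊆
        ↑(Submodule.span F (Set.range fun j => (w j).1 ⊗ₜ[F] (w j).2))} := by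
  unfold tensorRank3
  congr 1
  ext R
  simp only [Set.mem_ofPred_eq, Set.ofPred_subset, forall_exists_index, forall_eq_apply_imp_iff,
    SetLike.mem_coe, ← exists_eq_sum_tmul_iff_contr1_mem_span]
  constructor
  · rintro ⟨u, hu⟩
    exact ⟨fun j => (u j).2, fun j => (u j).1, hu⟩
  · rintro ⟨w, v, hv⟩
    exact ⟨fun j => (v j, w j), hv⟩

/-- For `T ∈ V₁ ⊗ V₂ ⊗ V₃`, the tensor rank of `T` equals the minimum number of
pure tensors in `V₂ ⊗ V₃` whose linear span contains the first contraction space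
`C₁(T) = {f(T) : f ∈ V₁^∨}`. -/
theorem stmt_1 {F : Type*} [Field F] {V₁ V₂ V₃ : Type*}
    [AddCommGroup V₁] [Module F V₁] [AddCommGroup V₂] [Module F V₂]
    [AddCommGroup V₃] [Module F V₃] [FiniteDimensional F V₁] [FiniteDimensional F V₂]
    [FiniteDimensional F V₃] (T : V₁ ⊗[F] (V₂ ⊗[F] V₃)) :
    tensorRank3 T = sInf {R | ∃ w : Fin R → V₂ × V₃,
      {S | ∃ f : Module.Dual F V₁, S = contr1 f T} ⊆
        ↑(Submodule.span F (Set.range fun j => (w j).1 ⊗ₜ[F] (w j).2))} :=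
  stmt_1_general T
end

section
/- The tensor rank of a presemifield of dimension n over F_q is at least N_q(n,n), the minimal length of an F_q-linear code of dimension n and minimum Hamming distance at least n. -/
/-- The tensor rank of an algebra `(V, ∘)` over `F`: the minimum number `R` of pure tensors
`a^∨ ⊗ b^∨ ⊗ z` summing to its multiplication tensor, i.e. the minimum `R` such that
`x ∘ y = Σ_{j=1}^R a_j(x) b_j(y) z_j` for all `x, y`. -/
noncomputable def algTensorRank {F : Type*} [Field F] {V : Type*} [AddCommGroup V]
    [Module F V] (mul : V →ₗ[F] V →ₗ[F] V) : ℕ :=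
  sInf {R | ∃ (a b : Fin R → Module.Dual F V) (z : Fin R → V),
    ∀ x y, mul x y = ∑ j, (a j x * b j y) • z j}

/-- `N_q(k, d)`: the minimum possible length of a linear code over the field `F` of
dimension `k` and minimum Hamming distance at least `d`. -/
noncomputable def minCodeLength (F : Type*) [Field F] [DecidableEq F] (k d : ℕ) : ℕ :=
  sInf {R | ∃ C : Submodule F (Fin R → F), Module.finrank F C = k ∧
    ∀ c ∈ C, c ≠ 0 → d ≤ hammingNorm c}

set_option maxHeartbeats 1000000 in
/-- The tensor rank of a presemifield of dimension `n` over `F_q` is at least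
`N_q(n, n)`, the minimal length of an `F_q`-linear code of dimension `n` and minimum
Hamming distance at least `n`. -/
theorem stmt_13 {F : Type*} [Field F] [Fintype F] [DecidableEq F] {n : ℕ}
    (mul : (Fin n → F) →ₗ[F] (Fin n → F) →ₗ[F] (Fin n → F))
    (hmul : ∀ x y, mul x y = 0 → x = 0 ∨ y = 0) :
    minCodeLength F n n ≤ algTensorRank mul := by
  rw [algTensorRank]
  classical
  have hne : {R | ∃ (a b : Fin R → Module.Dual F (Fin n → F)) (z : Fin R → (Fin n → F)),
      ∀ x y, mul x y = ∑ j, (a j x * b j y) • z j}.Nonempty := by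
    refine ⟨n * n, fun j => LinearMap.proj (finProdFinEquiv.symm j).1,
      fun j => LinearMap.proj (finProdFinEquiv.symm j).2,
      fun j => mul (Pi.single (finProdFinEquiv.symm j).1 1)
        (Pi.single (finProdFinEquiv.symm j).2 1), ?_⟩
    intro x y
    beta_reduce
    simp only [LinearMap.proj_apply]
    rw [Equiv.sum_comp finProdFinEquiv.symm
      (fun p : Fin n × Fin n => (x p.1 * y p.2) • mul (Pi.single p.1 1) (Pi.single p.2 1))]
    rw [Fintype.sum_prod_type]
    have hx : x = ∑ i, x i • (Pi.single i (1 : F) : Fin n → F) := by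
      simp [← Pi.single_smul, Finset.univ_sum_single]
    have hy : y = ∑ k, y k • (Pi.single k (1 : F) : Fin n → F) := by
      simp [← Pi.single_smul, Finset.univ_sum_single]
    conv_lhs => rw [hx, hy]
    simp only [map_sum, map_smul, LinearMap.sum_apply, LinearMap.smul_apply, Finset.smul_sum,
      smul_smul]
    rw [Finset.sum_comm]
    simp [mul_comm]
  refine le_csInf hne ?_
  rintro R ⟨a, b, z, h⟩
  rcases Nat.eq_zero_or_pos n with hn | hn
  · refine le_trans (Nat.sInf_le ?_) (Nat.zero_le R)
    exact ⟨⊥, by simp [hn], fun c hc hc0 => absurd ((Submodule.mem_bot F).mp hc) hc0⟩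
  · set φ : (Fin n → F) →ₗ[F] (Fin R → F) := LinearMap.pi (fun j => a j) with hφ
    have y₀ne : (Pi.single (⟨0, hn⟩ : Fin n) (1 : F) : Fin n → F) ≠ 0 :=
      fun h' => one_ne_zero (α := F) (by
        have h2 := congrFun h' ⟨0, hn⟩
        rwa [Pi.single_eq_same] at h2)
    have hinj : Function.Injective φ := by
      rw [← LinearMap.ker_eq_bot]
      rw [Submodule.eq_bot_iff]
      intro x hx
      have hax : ∀ j, a j x = 0 := fun j => congrFun (LinearMap.mem_ker.mp hx) j
      have : mul x (Pi.single (⟨0, hn⟩ : Fin n) (1 : F) : Fin n → F) = 0 := by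
        rw [h]; simp [hax]
      rcases hmul _ _ this with h' | h'
      · exact h'
      · exact absurd h' y₀ne
    refine Nat.sInf_le ⟨LinearMap.range φ, ?_, ?_⟩
    · rw [LinearMap.finrank_range_of_inj hinj, Module.finrank_fin_fun]
    · rintro c ⟨x, rfl⟩ hc0
      have hx0 : x ≠ 0 := fun h' => hc0 (by rw [h', map_zero])
      -- mul x is injective
      have hmx : Function.Injective (mul x) := by
        rw [← LinearMap.ker_eq_bot, Submodule.eq_bot_iff]
        intro y hy
        rcases hmul x y (LinearMap.mem_ker.mp hy) with h' | h'
        · exact absurd h' hx0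
        · exact h'
      set S : Finset (Fin R) := {j | a j x ≠ 0} with hS
      have hrange : LinearMap.range (mul x) ≤ Submodule.span F ((S.image z : Finset _) : Set _) := by
        rintro v ⟨y, rfl⟩
        rw [h]
        refine Submodule.sum_mem _ fun j _ => ?_
        by_cases hj : a j x = 0
        · simp [hj]
        · exact Submodule.smul_mem _ _ (Submodule.subset_span
            (by simp only [Finset.coe_image, Set.mem_image]; exact ⟨j, by simp [hS, hj], rfl⟩))
      have h1 : n ≤ (S.image z).card := by
        calc n = Module.finrank F (LinearMap.range (mul x)) := by
              rw [LinearMap.finrank_range_of_inj hmx, Module.finrank_fin_fun]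
          _ ≤ Module.finrank F (Submodule.span F ((S.image z : Finset _) : Set _)) :=
              Submodule.finrank_mono hrange
          _ ≤ (S.image z).card := finrank_span_finset_le_card _
      refine le_trans (le_trans h1 (Finset.card_image_le)) (le_of_eq ?_)
      rw [hammingNorm]
      apply congrArg Finset.card
      ext j
      simp only [hS, Finset.mem_filter, Finset.mem_univ, true_and]
      exact Iff.rfl
end
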